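/- Characteristic-polynomial factorization for the single-site leakage transition matrix (Eqs. (26)–(27)): for every n ≥ 1, all real p_1,…,p_n, q_1,…,q_n, and every real λ, det(Q(p,q) − λ·I) = (1 − λ) · f(λ), where f is formed with x_i = 1 − 2q_i. -/
import Mathlib

open Matrix Finset

noncomputable section

/-- The (n+1)×(n+1) single-site leakage transition matrix Q(p,q): rows and columns
indexed by 0,1,…,n, with Q₀₀ = 1 − ∑ᵢ pᵢ, Q₀ᵢ = 2qᵢ, Qᵢ₀ = pᵢ, Qᵢᵢ = 1 − 2qᵢ and
Qᵢⱼ = 0 for distinct i, j ≥ 1. -/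
def Qmat {n : ℕ} (p q : Fin n → ℝ) : Matrix (Fin (n + 1)) (Fin (n + 1)) ℝ :=
  Matrix.of fun a b =>
    Fin.cases (motive := fun _ => ℝ)
      (Fin.cases (motive := fun _ => ℝ) (1 - ∑ i, p i) (fun j => 2 * q j) b)
      (fun i =>
        Fin.cases (motive := fun _ => ℝ) (p i)
          (fun j => if i = j then 1 - 2 * q i else 0) b)
      a

/-- The polynomial f(x) = ∏ᵢ (xᵢ − x) − ∑ᵢ pᵢ ∏_{j ≠ i} (xⱼ − x). -/
def fpoly {n : ℕ} (x p : Fin n → ℝ) (t : ℝ) : ℝ :=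
  ∏ i, (x i - t) - ∑ i, p i * ∏ j ∈ Finset.univ.erase i, (x j - t)

/-- Determinant of an arrowhead matrix with invertible diagonal part. -/
lemma arrow_det {n : ℕ} (a : ℝ) (b c d : Fin n → ℝ) (hd : ∀ i, d i ≠ 0) :
    (Matrix.of fun i j : Fin (n + 1) =>
      Fin.cases (motive := fun _ => ℝ)
        (Fin.cases (motive := fun _ => ℝ) a b j)
        (fun i' => Fin.cases (motive := fun _ => ℝ) (c i')
          (fun j' => if i' = j' then d i' else 0) j) i).det
      = a * ∏ i, d i - ∑ i, b i * c i * ∏ j ∈ Finset.univ.erase i, d j := by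
  set e : Fin 1 ⊕ Fin n ≃ Fin (n + 1) := finSumFinEquiv.trans (finCongr (Nat.add_comm 1 n)) with he
  have he0 : ∀ i : Fin 1, e (Sum.inl i) = 0 := by
    intro i
    have : i = 0 := Fin.eq_zero i
    subst this
    rfl
  have heS : ∀ j : Fin n, e (Sum.inr j) = j.succ := by
    intro j
    ext
    simp [he, finSumFinEquiv]
  rw [← Matrix.det_submatrix_equiv_self e]
  have hmat : ((Matrix.of fun i j : Fin (n + 1) =>
      Fin.cases (motive := fun _ => ℝ)
        (Fin.cases (motive := fun _ => ℝ) a b j)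
        (fun i' => Fin.cases (motive := fun _ => ℝ) (c i')
          (fun j' => if i' = j' then d i' else 0) j) i).submatrix e e)
      = Matrix.fromBlocks (Matrix.of fun _ _ => a) (Matrix.of fun _ j => b j)
          (Matrix.of fun i _ => c i) (Matrix.diagonal d) := by
    ext i j
    rcases i with i | i <;> rcases j with j | j <;>
      simp [Matrix.submatrix_apply, he0, heS, Matrix.diagonal]
  rw [hmat]
  have hdet : IsUnit (Matrix.diagonal d).det := by
    rw [Matrix.det_diagonal]
    exact isUnit_iff_ne_zero.2 (Finset.prod_ne_zero_iff.2 fun i _ => hd i)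
  have hD : Invertible (Matrix.diagonal d) := Matrix.invertibleOfIsUnitDet _ hdet
  have hinv : ⅟(Matrix.diagonal d) = Matrix.diagonal fun i => (d i)⁻¹ := by
    apply invOf_eq_right_inv
    rw [Matrix.diagonal_mul_diagonal, ← Matrix.diagonal_one]
    have hfun : (fun i => d i * (d i)⁻¹) = fun _ : Fin n => (1 : ℝ) :=
      funext fun i => mul_inv_cancel₀ (hd i)
    rw [hfun]
  rw [Matrix.det_fromBlocks₂₂, hinv, Matrix.det_diagonal]
  have h11 : ((Matrix.of fun _ _ => a : Matrix (Fin 1) (Fin 1) ℝ) -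
      (Matrix.of fun _ j => b j : Matrix (Fin 1) (Fin n) ℝ) * Matrix.diagonal (fun i => (d i)⁻¹) *
        (Matrix.of fun i _ => c i : Matrix (Fin n) (Fin 1) ℝ)).det
      = a - ∑ i, b i * (d i)⁻¹ * c i := by
    rw [Matrix.det_fin_one]
    simp [Matrix.sub_apply, Matrix.mul_apply, Matrix.diagonal_apply,
      mul_ite, ite_mul, mul_zero, zero_mul, Finset.sum_ite_eq, Finset.sum_ite_eq']
  rw [h11, mul_sub, Finset.mul_sum]
  congr 1
  · ring
  · refine Finset.sum_congr rfl fun i _ => ?_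
    rw [← Finset.mul_prod_erase Finset.univ d (Finset.mem_univ i)]
    field_simp [hd i]

/-- Pure algebra rearrangement. -/
lemma arrow_to_fpoly {n : ℕ} (p q : Fin n → ℝ) (lam : ℝ) :
    (1 - ∑ i, p i - lam) * ∏ i, ((1 - 2 * q i) - lam)
      - ∑ i, (2 * q i) * p i * ∏ j ∈ Finset.univ.erase i, ((1 - 2 * q j) - lam)
      = (1 - lam) * fpoly (fun i => 1 - 2 * q i) p lam := by
  have key : ∑ i, (2 * q i) * p i * ∏ j ∈ Finset.univ.erase i, ((1 - 2 * q j) - lam)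
      = (1 - lam) * (∑ i, p i * ∏ j ∈ Finset.univ.erase i, ((1 - 2 * q j) - lam))
        - (∑ i, p i) * ∏ j, ((1 - 2 * q j) - lam) := by
    rw [Finset.mul_sum, Finset.sum_mul, ← Finset.sum_sub_distrib]
    refine Finset.sum_congr rfl fun i _ => ?_
    rw [← Finset.mul_prod_erase Finset.univ (fun j => (1 - 2 * q j) - lam)
      (Finset.mem_univ i)]
    ring
  rw [key]
  unfold fpoly
  ring

theorem charpoly_factorization (n : ℕ) (hn : 1 ≤ n) (p q : Fin n → ℝ) (lam : ℝ) :
    (Qmat p q - lam • (1 : Matrix (Fin (n + 1)) (Fin (n + 1)) ℝ)).det =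
      (1 - lam) * fpoly (fun i => 1 - 2 * q i) p lam := by
  have hcont1 : Continuous fun t : ℝ =>
      (Qmat p q - t • (1 : Matrix (Fin (n + 1)) (Fin (n + 1)) ℝ)).det := by
    exact Continuous.matrix_det (continuous_const.sub (continuous_id.smul continuous_const))
  have hcont2 : Continuous fun t : ℝ => (1 - t) * fpoly (fun i => 1 - 2 * q i) p t := by
    apply Continuous.mul (by fun_prop)
    unfold fpoly
    exact (continuous_finset_prod _ fun i _ => by fun_prop).sub
      (continuous_finset_sum _ fun i _ => Continuous.mul (by fun_prop)
        (continuous_finset_prod _ fun j _ => by fun_prop))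
  have hs : Dense {t : ℝ | ∀ i, (1 - 2 * q i) - t ≠ 0} := by
    have hset : {t : ℝ | ∀ i, (1 - 2 * q i) - t ≠ 0}
        = (Set.range fun i => 1 - 2 * q i)ᶜ := by
      ext t
      constructor
      · intro h hmem
        obtain ⟨i, hi⟩ := hmem
        have hi' : 1 - 2 * q i = t := hi
        exact h i (by rw [hi', sub_self])
      · intro h i hzero
        exact h ⟨i, sub_eq_zero.mp hzero⟩
    rw [hset]
    exact ((Set.finite_range _).countable).dense_compl ℝ
  have heq : Set.EqOn (fun t : ℝ =>
      (Qmat p q - t • (1 : Matrix (Fin (n + 1)) (Fin (n + 1)) ℝ)).det)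
      (fun t : ℝ => (1 - t) * fpoly (fun i => 1 - 2 * q i) p t)
      {t : ℝ | ∀ i, (1 - 2 * q i) - t ≠ 0} := by
    intro t ht
    simp only []
    have hM : Qmat p q - t • (1 : Matrix (Fin (n + 1)) (Fin (n + 1)) ℝ)
        = (Matrix.of fun i j : Fin (n + 1) =>
          Fin.cases (motive := fun _ => ℝ)
            (Fin.cases (motive := fun _ => ℝ) (1 - ∑ i, p i - t) (fun j => 2 * q j) j)
            (fun i' => Fin.cases (motive := fun _ => ℝ) (p i')
              (fun j' => if i' = j' then (1 - 2 * q i') - t else 0) j) i) := by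
      ext i j
      refine Fin.cases ?_ (fun i' => ?_) i <;> refine Fin.cases ?_ (fun j' => ?_) j <;>
        simp [Qmat, Matrix.sub_apply, Matrix.one_apply, Fin.succ_ne_zero,
          (Fin.succ_ne_zero _).symm]
      by_cases h : i' = j' <;> simp [h]
    rw [hM, arrow_det _ _ _ _ ht, arrow_to_fpoly]
  exact congrFun (Continuous.ext_on hs hcont1 hcont2 heq) lam
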